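/- Suppose the next-stage value blocks are outer products: V_{xx}^{t+1} = z zᵀ, V_{x x_r}^{t+1} = z z_rᵀ, and V_{x_r x_r}^{t+1} = z_r z_rᵀ for vectors z ∈ ℝ^{n'}, z_r ∈ ℝʳ. Let F_x ∈ ℝ^{n'×n}, F_u ∈ ℝ^{n'×m}, and Q_uu ∈ ℝ^{m×m} symmetric invertible, and set q_x = F_xᵀ z, q_u = F_uᵀ z, K = −Q_uu⁻¹ (F_uᵀ V_{xx}^{t+1} F_x), G = −Q_uu⁻¹ F_uᵀ V_{x x_r}^{t+1}, c = 1 − q_uᵀ Q_uu⁻¹ q_u. Then the GT-DDP residual value recursions yield V_{x x_r}^t := F_xᵀ V_{x x_r}^{t+1} − Kᵀ Q_uu G = c · q_x z_rᵀ and V_{x_r x_r}^t := V_{x_r x_r}^{t+1} − Gᵀ Q_uu G = c · z_r z_rᵀ; that is, the outer-product factorization propagates through a residual block, with the residual vector rescaled by the same scalar factor at each stage. -/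

import Mathlib

/-!
Under the Gauss–Newton approximation every block is rank one: with `w = Q_uu⁻¹ q_u` one has
`K = -w q_xᵀ` and `G = -w z_rᵀ`, so both corrections `Kᵀ Q_uu G` and `Gᵀ Q_uu G` are the
outer products `q_x z_rᵀ` and `z_r z_rᵀ` scaled by the quadratic form `wᵀ Q_uu w = q_uᵀ Q_uu⁻¹ q_u`.
-/

open Matrix

namespace Matrix

variable {k l m n : Type*} {α : Type*}

theorem transpose_mul_vecMulVec_mul [Fintype m] [Fintype n] [CommSemiring α]
    (A : Matrix m k α) (B : Matrix n l α) (a : m → α) (b : n → α) :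
    Aᵀ * vecMulVec a b * B = vecMulVec (Aᵀ *ᵥ a) (Bᵀ *ᵥ b) := by
  rw [mul_vecMulVec, vecMulVec_mul, mulVec_transpose, mulVec_transpose]

theorem transpose_vecMulVec_mul_mul_vecMulVec [Fintype m] [CommSemiring α]
    (Q : Matrix m m α) (w : m → α) (a : k → α) (b : l → α) :
    (vecMulVec w a)ᵀ * Q * vecMulVec w b = (w ⬝ᵥ (Q *ᵥ w)) • vecMulVec a b := by
  rw [transpose_vecMulVec, vecMulVec_mul, vecMulVec_mul_vecMulVec, ← dotProduct_mulVec,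
    vecMulVec_smul]

/-- When `Q` is singular both sides vanish, because Mathlib's `Q⁻¹` is then `0`. -/
theorem nonsing_inv_mulVec_dotProduct_mulVec [Fintype m] [DecidableEq m] [CommRing α]
    (Q : Matrix m m α) (q : m → α) :
    Q⁻¹ *ᵥ q ⬝ᵥ (Q *ᵥ (Q⁻¹ *ᵥ q)) = q ⬝ᵥ (Q⁻¹ *ᵥ q) := by
  by_cases hQ : IsUnit Q.det
  · rw [mulVec_mulVec, mul_nonsing_inv Q hQ, one_mulVec, dotProduct_comm]
  · simp [nonsing_inv_apply_not_isUnit Q hQ]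

theorem vecMulVec_sub_transpose_gain_mul_gain [Fintype m] [DecidableEq m] [CommRing α]
    (Q : Matrix m m α) (q : m → α) (a : k → α) (b : l → α) :
    vecMulVec a b - (-vecMulVec (Q⁻¹ *ᵥ q) a)ᵀ * Q * -vecMulVec (Q⁻¹ *ᵥ q) b
      = (1 - q ⬝ᵥ (Q⁻¹ *ᵥ q)) • vecMulVec a b := by
  rw [transpose_neg, Matrix.neg_mul, Matrix.neg_mul, Matrix.mul_neg, neg_neg,
    transpose_vecMulVec_mul_mul_vecMulVec, nonsing_inv_mulVec_dotProduct_mulVec, sub_smul,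
    one_smul]

end Matrix

theorem gtddp_residual_outer_product_general {n npr m r : ℕ}
    (z : Fin npr → ℝ) (zr : Fin r → ℝ)
    (Fx : Matrix (Fin npr) (Fin n) ℝ) (Fu : Matrix (Fin npr) (Fin m) ℝ)
    (Quu : Matrix (Fin m) (Fin m) ℝ) :
    let Vxx1 := vecMulVec z z
    let Vxxr1 := vecMulVec z zr
    let Vxrxr1 := vecMulVec zr zr
    let qx := Fxᵀ *ᵥ z
    let qu := Fuᵀ *ᵥ z
    let K := -(Quu⁻¹ * (Fuᵀ * Vxx1 * Fx))
    let G := -(Quu⁻¹ * (Fuᵀ * Vxxr1))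
    let c := 1 - qu ⬝ᵥ (Quu⁻¹ *ᵥ qu)
    Fxᵀ * Vxxr1 - Kᵀ * Quu * G = c • vecMulVec qx zr
      ∧ Vxrxr1 - Gᵀ * Quu * G = c • vecMulVec zr zr := by
  intro Vxx1 Vxxr1 Vxrxr1 qx qu K G c
  have hK : K = -vecMulVec (Quu⁻¹ *ᵥ qu) qx := by
    rw [show K = -(Quu⁻¹ * (Fuᵀ * vecMulVec z z * Fx)) from rfl, transpose_mul_vecMulVec_mul,
      mul_vecMulVec]
  have hG : G = -vecMulVec (Quu⁻¹ *ᵥ qu) zr := by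
    rw [show G = -(Quu⁻¹ * (Fuᵀ * vecMulVec z zr)) from rfl, mul_vecMulVec, mul_vecMulVec]
  have hFx : Fxᵀ * Vxxr1 = vecMulVec qx zr := mul_vecMulVec _ _ _
  rw [hK, hG, hFx]
  exact ⟨vecMulVec_sub_transpose_gain_mul_gain Quu qu qx zr,
    vecMulVec_sub_transpose_gain_mul_gain Quu qu zr zr⟩

/-- The outer-product factorization propagates through a residual block:
V_{x x_r}^t = c·q_x z_rᵀ and V_{x_r x_r}^t = c·z_r z_rᵀ with the same scalar c. -/
theorem gtddp_residual_outer_product {n npr m r : ℕ}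
    (z : Fin npr → ℝ) (zr : Fin r → ℝ)
    (Fx : Matrix (Fin npr) (Fin n) ℝ) (Fu : Matrix (Fin npr) (Fin m) ℝ)
    (Quu : Matrix (Fin m) (Fin m) ℝ)
    (hsymm : Quu.IsSymm) (hinv : IsUnit Quu.det) :
    let Vxx1 := vecMulVec z z
    let Vxxr1 := vecMulVec z zr
    let Vxrxr1 := vecMulVec zr zr
    let qx := Fxᵀ *ᵥ z
    let qu := Fuᵀ *ᵥ z
    let K := -(Quu⁻¹ * (Fuᵀ * Vxx1 * Fx))
    let G := -(Quu⁻¹ * (Fuᵀ * Vxxr1))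
    let c := 1 - qu ⬝ᵥ (Quu⁻¹ *ᵥ qu)
    Fxᵀ * Vxxr1 - Kᵀ * Quu * G = c • vecMulVec qx zr
      ∧ Vxrxr1 - Gᵀ * Quu * G = c • vecMulVec zr zr :=
  gtddp_residual_outer_product_general z zr Fx Fu Quu
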